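/- In a valid modular DRUP proof π of the unsatisfiability of Φ_s ∧ Φ_m, every clause copied from module s to module m is entailed by Φ_s together with the backward clauses copied so far: for any step c_i = (cp(s), m, cls) in π, (L_B(π^i) ∧ Φ_s) ⊨ cls; symmetrically, for any step c_j = (cp(m), s, cls), (L_F(π^j) ∧ Φ_m) ⊨ cls. -/

import Mathlib

/-- Propositional variables. -/
abbrev Var := ℕ
/-- A literal is a variable together with a polarity. -/
abbrev Lit := Var × Bool
/-- A clause is a finite set of literals. -/
abbrev Clause := Finset Lit
/-- A total truth assignment. -/
abbrev Assignment := Var → Bool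

/-- Negation of a literal. -/
def Lit.neg (l : Lit) : Lit := (l.1, !l.2)

/-- An assignment satisfies a literal. -/
def satLit (σ : Assignment) (l : Lit) : Prop := σ l.1 = l.2
/-- An assignment satisfies a clause (some literal is true). -/
def satClause (σ : Assignment) (C : Clause) : Prop := ∃ l ∈ C, satLit σ l
/-- An assignment satisfies a set of clauses. -/
def satSet (σ : Assignment) (Γ : Set Clause) : Prop := ∀ C ∈ Γ, satClause σ C
/-- Semantic consequence: every model of Γ satisfies C. -/
def entails (Γ : Set Clause) (C : Clause) : Prop :=
  ∀ σ : Assignment, satSet σ Γ → satClause σ C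

/-- Unit-propagation closure: the least set of literals containing the
assumptions `A` and closed under the unit-propagation rule for clauses of `Γ`:
if all literals of a clause but one are falsified (their negations derived),
the remaining literal is derived. -/
inductive UPC (Γ : Set Clause) (A : Set Lit) : Lit → Prop
  | assm {l : Lit} : l ∈ A → UPC Γ A l
  | prop {C : Clause} {l : Lit} : C ∈ Γ → l ∈ C →
      (∀ l' ∈ C, l' ≠ l → UPC Γ A (Lit.neg l')) → UPC Γ A l

/-- Unit propagation from `Γ` under assumptions `A` reaches a conflict:
some clause of `Γ` has all its literals falsified by the closure. -/
def upConflict (Γ : Set Clause) (A : Set Lit) : Prop :=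
  ∃ C ∈ Γ, ∀ l ∈ C, UPC Γ A (Lit.neg l)

/-- `RUP Γ C` (written `Γ ⊢_UP C`): unit propagation from `Γ` together with the
negations of the literals of `C` reaches a conflict. -/
def RUP (Γ : Set Clause) (C : Clause) : Prop :=
  upConflict Γ {l | ∃ m ∈ C, l = Lit.neg m}

/-- The two modules: secondary `s` and main `m`. -/
inductive ModIdx | s | m
deriving DecidableEq

/-- A step of a modular DRUP proof. -/
inductive MStep
  | asserted (idx : ModIdx) (c : Clause)
  | rup (idx : ModIdx) (c : Clause)
  | cp (src dst : ModIdx) (c : Clause)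
  | del (idx : ModIdx) (c : Clause)
deriving DecidableEq

/-- A step adds clause `c` to module `idx` (by assertion, rup, or copy into `idx`). -/
def MStep.addsTo : MStep → ModIdx → Clause → Prop
  | .asserted i c, j, d => i = j ∧ c = d
  | .rup i c, j, d => i = j ∧ c = d
  | .cp _ i c, j, d => i = j ∧ c = d
  | .del _ _, _, _ => False

/-- Active clauses of module `idx`: added to `idx` and not later deleted from `idx`. -/
def mactive (π : List MStep) (idx : ModIdx) : Set Clause :=
  {c | ∃ i, ∃ hi : i < π.length, (π[i]'hi).addsTo idx c ∧
      ∀ k, ∀ hk : k < π.length, i < k → (π[k]'hk) ≠ MStep.del idx c}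

/-- All clauses asserted into module `idx`. -/
def allasserted (π : List MStep) (idx : ModIdx) : Set Clause :=
  {c | MStep.asserted idx c ∈ π}

/-- Validity of a modular DRUP proof: every rup step is RUP w.r.t. the active
clauses of its module, every copy step's clause is RUP in its source module,
and the final step adds ⊥ to module `m` (by rup or by copy from `s`). -/
def validModular (π : List MStep) : Prop :=
  (∀ i, ∀ hi : i < π.length, ∀ idx c,
      (π[i]'hi) = MStep.rup idx c → RUP (mactive (π.take i) idx) c) ∧
  (∀ i, ∀ hi : i < π.length, ∀ src dst c,
      (π[i]'hi) = MStep.cp src dst c → RUP (mactive (π.take i) src) c) ∧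
  ∃ hne : π ≠ [],
    π.getLast hne = MStep.rup ModIdx.m ∅ ∨ π.getLast hne = MStep.cp ModIdx.s ModIdx.m ∅

/-- The proof contains no deletion steps. -/
def noDel (π : List MStep) : Prop := ∀ st ∈ π, ∀ idx c, st ≠ MStep.del idx c

/-- Backward clauses of a prefix: clauses copied from `m` to `s`. -/
def LB (π : List MStep) : Set Clause := {c | MStep.cp ModIdx.m ModIdx.s c ∈ π}
/-- Forward clauses of a prefix: clauses copied from `s` to `m`. -/
def LF (π : List MStep) : Set Clause := {c | MStep.cp ModIdx.s ModIdx.m c ∈ π}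

/-! Unit propagation is sound: under an assignment satisfying `Γ` and the assumptions,
every propagated literal is true. Hence each clause added to a module is entailed by the
earlier clauses of that module, and by induction along the proof every clause of module `a`
is entailed by the clauses asserted into `a` together with those imported into `a` so far.
A copy step out of `a` is RUP in `a`, so its clause is entailed by the same set. -/

lemma satLit_neg_iff (σ : Assignment) (l : Lit) : satLit σ l.neg ↔ ¬satLit σ l := by
  simp [satLit, Lit.neg, Bool.eq_not_iff]

lemma UPC.satLit {Γ : Set Clause} {A : Set Lit} {σ : Assignment}
    (hΓ : satSet σ Γ) (hA : ∀ l ∈ A, satLit σ l) {l : Lit} (h : UPC Γ A l) : satLit σ l := by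
  induction h with
  | assm hl => exact hA _ hl
  | @prop C l hC hl _ ih =>
    obtain ⟨l', hl', hsat⟩ := hΓ C hC
    by_contra hne
    have hl'l : l' ≠ l := by rintro rfl; exact hne hsat
    exact (satLit_neg_iff σ l').mp (ih l' hl' hl'l) hsat

lemma RUP.entails {Γ : Set Clause} {C : Clause} (h : RUP Γ C) : entails Γ C := by
  intro σ hσ
  by_contra hC
  have hA : ∀ l ∈ {l | ∃ m ∈ C, l = Lit.neg m}, satLit σ l := by
    rintro l ⟨m, hm, rfl⟩
    exact (satLit_neg_iff σ m).mpr fun hsat => hC ⟨m, hm, hsat⟩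
  obtain ⟨D, hD, hfalse⟩ := h
  obtain ⟨l, hl, hsat⟩ := hσ D hD
  exact (satLit_neg_iff σ l).mp ((hfalse l hl).satLit hσ hA) hsat

lemma entails_of_mem {Γ : Set Clause} {C : Clause} (h : C ∈ Γ) : entails Γ C :=
  fun _ hσ => hσ C h

lemma entails.mono {Γ Δ : Set Clause} {C : Clause} (h : entails Γ C) (hΓΔ : Γ ⊆ Δ) :
    entails Δ C :=
  fun σ hσ => h σ fun D hD => hσ D (hΓΔ hD)

lemma entails.trans {Γ Δ : Set Clause} {C : Clause} (h : entails Γ C)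
    (hΓ : ∀ D ∈ Γ, entails Δ D) : entails Δ C :=
  fun σ hσ => h σ fun D hD => hΓ D hD σ hσ

/-- The clauses added to module `idx` somewhere in `π`, ignoring deletions. -/
def addedClauses (π : List MStep) (idx : ModIdx) : Set Clause :=
  {c | ∃ st ∈ π, st.addsTo idx c}

lemma mactive_subset_addedClauses (π : List MStep) (idx : ModIdx) :
    mactive π idx ⊆ addedClauses π idx := by
  rintro c ⟨i, hi, hadd, -⟩
  exact ⟨_, List.getElem_mem hi, hadd⟩

lemma entails_of_mem_addedClauses {π : List MStep} {a : ModIdx} {Γ : Set Clause}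
    (h : ∀ j, ∀ hj : j < π.length, ∀ c, (π[j]'hj).addsTo a c →
      entails (Γ ∪ addedClauses (π.take j) a) c) :
    ∀ c ∈ addedClauses π a, entails Γ c := by
  suffices ∀ j, ∀ hj : j < π.length, ∀ c, (π[j]'hj).addsTo a c → entails Γ c by
    rintro c ⟨st, hst, hadd⟩
    obtain ⟨j, hj, rfl⟩ := List.mem_iff_getElem.mp hst
    exact this j hj c hadd
  intro j
  induction j using Nat.strong_induction_on with
  | _ j ih =>
    intro hj c hadd
    refine (h j hj c hadd).trans ?_
    rintro d (hd | ⟨st, hst, hdadd⟩)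
    · exact entails_of_mem hd
    · obtain ⟨k, hk, rfl⟩ := List.mem_iff_getElem.mp hst
      rw [List.getElem_take] at hdadd
      have hkj : k < j ∧ k < π.length := by simpa using hk
      exact ih k hkj.1 _ d hdadd

lemma ModIdx.eq_or_eq_of_ne {a b : ModIdx} (hab : a ≠ b) (x : ModIdx) : x = a ∨ x = b := by
  cases x <;> cases a <;> cases b <;> simp_all

def importedClauses (π : List MStep) (b a : ModIdx) : Set Clause :=
  {c | MStep.cp b a c ∈ π}

section Module

variable {π : List MStep} {Φ : Set Clause} {a b : ModIdx}

variable (hrup : ∀ i, ∀ hi : i < π.length, ∀ idx c,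
    (π[i]'hi) = MStep.rup idx c → RUP (mactive (π.take i) idx) c)
  (hcp : ∀ i, ∀ hi : i < π.length, ∀ src dst c,
    (π[i]'hi) = MStep.cp src dst c → RUP (mactive (π.take i) src) c)
  (hab : a ≠ b) (hΦ : allasserted π a ⊆ Φ)
include hrup hcp hab hΦ

lemma entails_of_mem_addedClauses_take (i : ℕ) :
    ∀ c ∈ addedClauses (π.take i) a, entails (importedClauses (π.take i) b a ∪ Φ) c := by
  refine entails_of_mem_addedClauses fun j hj c hadd => ?_
  obtain ⟨hji, hjπ⟩ : j < i ∧ j < π.length := by simpa using hj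
  have htake : (π.take i).take j = π.take j := by
    rw [List.take_take, min_eq_left hji.le]
  rw [List.getElem_take] at hadd
  rw [htake]
  have of_rup : RUP (mactive (π.take j) a) c →
      entails (importedClauses (π.take i) b a ∪ Φ ∪ addedClauses (π.take j) a) c :=
    fun hr => hr.entails.mono ((mactive_subset_addedClauses _ _).trans Set.subset_union_right)
  cases hstep : π[j]'hjπ with
  | asserted idx c' =>
    rw [hstep] at hadd
    rw [hadd.1, hadd.2] at hstep
    have hmem : MStep.asserted a c ∈ π := hstep ▸ List.getElem_mem hjπ
    exact entails_of_mem (.inl (.inr (hΦ hmem)))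
  | rup idx c' =>
    rw [hstep] at hadd
    rw [hadd.1, hadd.2] at hstep
    exact of_rup (hrup j hjπ _ _ hstep)
  | cp src idx c' =>
    rw [hstep] at hadd
    rw [hadd.1, hadd.2] at hstep
    rcases ModIdx.eq_or_eq_of_ne hab src with rfl | rfl
    · exact of_rup (hcp j hjπ _ _ _ hstep)
    · have hmem := List.getElem_mem hj
      rw [List.getElem_take, hstep] at hmem
      exact entails_of_mem (.inl (.inl hmem))
  | del idx c' => rw [hstep] at hadd; exact hadd.elim

lemma entails_of_getElem_eq_cp {i : ℕ} (hi : i < π.length) {dst : ModIdx} {c : Clause}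
    (hstep : π[i] = MStep.cp a dst c) :
    entails (importedClauses (π.take i) b a ∪ Φ) c :=
  (hcp i hi _ _ _ hstep).entails.trans fun d hd =>
    entails_of_mem_addedClauses_take hrup hcp hab hΦ i d (mactive_subset_addedClauses _ _ hd)

end Module

theorem copied_clauses_entailed_general (π : List MStep) (Φs Φm : Set Clause)
    (hval : validModular π)
    (hs : allasserted π ModIdx.s ⊆ Φs) (hm : allasserted π ModIdx.m ⊆ Φm) :
    (∀ i, ∀ hi : i < π.length, ∀ cls : Clause,
        (π[i]'hi) = MStep.cp ModIdx.s ModIdx.m cls →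
        entails (LB (π.take i) ∪ Φs) cls) ∧
    (∀ j, ∀ hj : j < π.length, ∀ cls : Clause,
        (π[j]'hj) = MStep.cp ModIdx.m ModIdx.s cls →
        entails (LF (π.take j) ∪ Φm) cls) := by
  obtain ⟨hrup, hcp, -⟩ := hval
  exact ⟨fun i hi _ => entails_of_getElem_eq_cp hrup hcp (by decide) hs hi,
    fun j hj _ => entails_of_getElem_eq_cp hrup hcp (by decide) hm hj⟩

/-- in a valid modular DRUP proof (without deletions) of the
unsatisfiability of `Φs ∧ Φm`, every clause copied from `s` to `m` at step `i`
is entailed by `Φs` together with the backward clauses copied so far, and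
symmetrically for clauses copied from `m` to `s`. -/
theorem copied_clauses_entailed (π : List MStep) (Φs Φm : Set Clause)
    (hval : validModular π) (hnd : noDel π)
    (hs : allasserted π ModIdx.s ⊆ Φs) (hm : allasserted π ModIdx.m ⊆ Φm) :
    (∀ i, ∀ hi : i < π.length, ∀ cls : Clause,
        (π[i]'hi) = MStep.cp ModIdx.s ModIdx.m cls →
        entails (LB (π.take i) ∪ Φs) cls) ∧
    (∀ j, ∀ hj : j < π.length, ∀ cls : Clause,
        (π[j]'hj) = MStep.cp ModIdx.m ModIdx.s cls →
        entails (LF (π.take j) ∪ Φm) cls) :=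
  copied_clauses_entailed_general π Φs Φm hval hs hm
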